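/- Assume 0 ∈ D. Let x, y, x̂, ŷ ∈ ℂ^n with ‖x‖₂ = ‖y‖₂ = ‖x̂‖₂ = ‖ŷ‖₂ = 1, y* x > 0 and ŷ* x̂ > 0 (real and positive), and suppose δ := ‖yx* − ŷx̂*‖₂ < (y* x)/n. Then (yx*)|_S ≠ 0 and (ŷx̂*)|_S ≠ 0, and ‖(yx*)|_T − (ŷx̂*)|_T‖₂ ≤ 2nδ/(y* x). -/

import Mathlib

open Matrix Complex

/-- Membership in the subspace `S` of structured Toeplitz matrices with diagonal offsets in `D`. -/
def InToeplitzS (n : ℕ) (D : Finset ℤ) (M : Matrix (Fin n) (Fin n) ℂ) : Prop :=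
  (∀ i j : Fin n, ((j : ℤ) - (i : ℤ)) ∉ D → M i j = 0) ∧
  (∀ i j k l : Fin n, ((j : ℤ) - (i : ℤ)) = ((l : ℤ) - (k : ℤ)) → M i j = M k l)

/-- The diagonal-averaging map: orthogonal projection onto the structured Toeplitz subspace. -/
noncomputable def projS (n : ℕ) (D : Finset ℤ) (M : Matrix (Fin n) (Fin n) ℂ) :
    Matrix (Fin n) (Fin n) ℂ := fun i j =>
  if ((j : ℤ) - (i : ℤ)) ∈ D then
    (∑ k : Fin n, ∑ l : Fin n,
      if ((l : ℤ) - (k : ℤ)) = ((j : ℤ) - (i : ℤ)) then M k l else 0) /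
      ((n - ((j : ℤ) - (i : ℤ)).natAbs : ℕ) : ℂ)
  else 0

/-- Frobenius norm of a complex matrix. -/
noncomputable def frobNorm {n : ℕ} (M : Matrix (Fin n) (Fin n) ℂ) : ℝ :=
  Real.sqrt (∑ i : Fin n, ∑ j : Fin n, ‖M i j‖ ^ 2)

/-- Frobenius inner product `⟨A, B⟩ = trace (A* B)`. -/
noncomputable def frobInner {n : ℕ} (A B : Matrix (Fin n) (Fin n) ℂ) : ℂ :=
  (Aᴴ * B).trace

/-- Normalized projection `M|_T = M|_S / ‖M|_S‖_F`. -/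
noncomputable def projT (n : ℕ) (D : Finset ℤ) (M : Matrix (Fin n) (Fin n) ℂ) :
    Matrix (Fin n) (Fin n) ℂ :=
  (frobNorm (projS n D M))⁻¹ • projS n D M

/-- Euclidean norm of a complex vector. -/
noncomputable def euclNorm {n : ℕ} (x : Fin n → ℂ) : ℝ :=
  Real.sqrt (∑ k : Fin n, ‖x k‖ ^ 2)

/-- Spectral norm (operator 2-norm) of a complex matrix. -/
noncomputable def specNorm {n : ℕ} (M : Matrix (Fin n) (Fin n) ℂ) : ℝ :=
  ‖Matrix.toEuclideanCLM (𝕜 := ℂ) M‖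

section Aux
variable {n : ℕ}

def dFiber (n : ℕ) (d : ℤ) : Finset (Fin n × Fin n) :=
  Finset.univ.filter (fun p => ((p.2 : ℤ) - (p.1 : ℤ)) = d)

lemma mem_dFiber {d : ℤ} {p : Fin n × Fin n} :
    p ∈ dFiber n d ↔ ((p.2 : ℤ) - (p.1 : ℤ)) = d := by
  simp [dFiber]

lemma card_dFiber_nat (a : ℕ) (ha : a < n) :
    (dFiber n (a : ℤ)).card = n - a := by
  rw [← Finset.card_range (n - a)]
  refine Finset.card_nbij' (fun p => (p.1 : ℕ))
    (fun k => (⟨min k (n - 1), by omega⟩, ⟨min (k + a) (n - 1), by omega⟩)) ?_ ?_ ?_ ?_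
  · intro p hp
    rw [Finset.mem_coe, mem_dFiber] at hp
    have h1 := p.1.isLt
    have h2 := p.2.isLt
    simp only [Finset.mem_coe, Finset.mem_range]
    omega
  · intro k hk
    simp only [Finset.mem_coe, Finset.mem_range] at hk
    rw [Finset.mem_coe, mem_dFiber]
    push_cast
    omega
  · intro p hp
    rw [Finset.mem_coe, mem_dFiber] at hp
    have h1 := p.1.isLt
    have h2 := p.2.isLt
    obtain ⟨p1, p2⟩ := p
    simp only [Prod.mk.injEq, Fin.ext_iff] at *
    omega
  · intro k hk
    simp only [Finset.mem_coe, Finset.mem_range] at hk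
    simp
    omega

lemma card_dFiber_swap (d : ℤ) : (dFiber n d).card = (dFiber n (-d)).card := by
  refine Finset.card_nbij' Prod.swap Prod.swap ?_ ?_ ?_ ?_ <;>
    intro p hp <;> simp_all [mem_dFiber] <;> omega

lemma card_dFiber (d : ℤ) (h1 : -((n : ℤ) - 1) ≤ d) (h2 : d ≤ (n : ℤ) - 1) (hn : 1 ≤ n) :
    (dFiber n d).card = n - d.natAbs := by
  rcases le_or_gt 0 d with h | h
  · have hd : d = ((d.toNat : ℕ) : ℤ) := by omega
    rw [hd, card_dFiber_nat d.toNat (by omega)]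
    omega
  · rw [card_dFiber_swap]
    have hd : -d = ((d.natAbs : ℕ) : ℤ) := by omega
    rw [hd, card_dFiber_nat d.natAbs (by omega)]

lemma sum_ite_eq_sum_dFiber (d : ℤ) (f : Fin n → Fin n → ℂ) :
    (∑ k : Fin n, ∑ l : Fin n, if ((l : ℤ) - (k : ℤ)) = d then f k l else 0) =
      ∑ p ∈ dFiber n d, f p.1 p.2 := by
  rw [dFiber, Finset.sum_filter, Fintype.sum_prod_type]

lemma projS_apply (D : Finset ℤ) (M : Matrix (Fin n) (Fin n) ℂ) (i j : Fin n) :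
    projS n D M i j =
      if ((j : ℤ) - (i : ℤ)) ∈ D then
        (∑ p ∈ dFiber n ((j : ℤ) - (i : ℤ)), M p.1 p.2) /
          ((n - ((j : ℤ) - (i : ℤ)).natAbs : ℕ) : ℂ)
      else 0 := by
  simp only [projS]
  rw [sum_ite_eq_sum_dFiber (f := M)]

lemma sum_dFiber_zero (f : Fin n → Fin n → ℂ) :
    (∑ p ∈ dFiber n 0, f p.1 p.2) = ∑ i : Fin n, f i i := by
  rw [← sum_ite_eq_sum_dFiber]
  apply Finset.sum_congr rfl
  intro k _
  have hiff : ∀ l : Fin n, (((l : ℤ) - (k : ℤ)) = 0) ↔ l = k := by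
    intro l
    rw [sub_eq_zero]
    constructor
    · intro h; exact Fin.ext (by exact_mod_cast h)
    · rintro rfl; rfl
  rw [Finset.sum_congr rfl (fun l _ => by rw [if_congr (hiff l) rfl rfl])]
  simp

lemma projS_diag (D : Finset ℤ) (hD0 : (0 : ℤ) ∈ D) (M : Matrix (Fin n) (Fin n) ℂ)
    (i : Fin n) : projS n D M i i = (∑ k : Fin n, M k k) / (n : ℂ) := by
  rw [projS_apply]
  simp only [sub_self, hD0, if_true, Int.natAbs_zero, Nat.sub_zero]
  rw [sum_dFiber_zero (fun k l => M k l)]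

end Aux

section Aux2
variable {n : ℕ}

lemma frob_sq_projS_le (hn : 1 ≤ n) (D : Finset ℤ)
    (hDsub : D ⊆ Finset.Icc (-((n : ℤ) - 1)) ((n : ℤ) - 1))
    (M : Matrix (Fin n) (Fin n) ℂ) :
    (∑ i : Fin n, ∑ j : Fin n, ‖projS n D M i j‖ ^ 2) ≤
      ∑ i : Fin n, ∑ j : Fin n, ‖M i j‖ ^ 2 := by
  have hmaps : ∀ p : Fin n × Fin n, p ∈ (Finset.univ : Finset (Fin n × Fin n)) →
      ((p.2 : ℤ) - (p.1 : ℤ)) ∈ Finset.Icc (-((n : ℤ) - 1)) ((n : ℤ) - 1) := by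
    intro p _
    have h1 := p.1.isLt
    have h2 := p.2.isLt
    simp only [Finset.mem_Icc]
    omega
  rw [← Fintype.sum_prod_type (f := fun p : Fin n × Fin n => ‖projS n D M p.1 p.2‖ ^ 2),
      ← Fintype.sum_prod_type (f := fun p : Fin n × Fin n => ‖M p.1 p.2‖ ^ 2),
      ← Finset.sum_fiberwise_of_maps_to hmaps (fun p : Fin n × Fin n => ‖projS n D M p.1 p.2‖ ^ 2),
      ← Finset.sum_fiberwise_of_maps_to hmaps (fun p : Fin n × Fin n => ‖M p.1 p.2‖ ^ 2)]
  apply Finset.sum_le_sum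
  intro d hd
  rw [Finset.mem_Icc] at hd
  have hfib : (Finset.univ.filter
      (fun p : Fin n × Fin n => ((p.2 : ℤ) - (p.1 : ℤ)) = d)) = dFiber n d := rfl
  rw [hfib]
  by_cases hdD : d ∈ D
  · have hcard := card_dFiber d hd.1 hd.2 hn
    have hcpos : 1 ≤ n - d.natAbs := by omega
    set c : ℕ := n - d.natAbs with hc
    have hc0 : (0 : ℝ) < (c : ℝ) := by exact_mod_cast hcpos
    set Sd : ℂ := ∑ p ∈ dFiber n d, M p.1 p.2 with hS
    have hval : ∀ p ∈ dFiber n d, ‖projS n D M p.1 p.2‖ ^ 2 = (‖Sd‖ / (c : ℝ)) ^ 2 := by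
      intro p hp
      rw [mem_dFiber] at hp
      rw [projS_apply, hp, if_pos hdD, norm_div]
      norm_num
      rfl
    rw [Finset.sum_congr rfl hval, Finset.sum_const, hcard, nsmul_eq_mul]
    have hT : ‖Sd‖ ≤ ∑ p ∈ dFiber n d, ‖M p.1 p.2‖ := norm_sum_le _ _
    have hCS : (∑ p ∈ dFiber n d, ‖M p.1 p.2‖) ^ 2 ≤
        (c : ℝ) * ∑ p ∈ dFiber n d, ‖M p.1 p.2‖ ^ 2 := by
      have h := sq_sum_le_card_mul_sum_sq (s := dFiber n d)
        (f := fun p => ‖M p.1 p.2‖)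
      rwa [hcard] at h
    have hSd2 : ‖Sd‖ ^ 2 ≤ (c : ℝ) * ∑ p ∈ dFiber n d, ‖M p.1 p.2‖ ^ 2 :=
      le_trans (pow_le_pow_left₀ (norm_nonneg _) hT 2) hCS
    have heq : (c : ℝ) * (‖Sd‖ / (c : ℝ)) ^ 2 = ‖Sd‖ ^ 2 / (c : ℝ) := by
      field_simp
    rw [heq, div_le_iff₀ hc0]
    nlinarith [hSd2]
  · have hval : ∀ p ∈ dFiber n d, ‖projS n D M p.1 p.2‖ ^ 2 = 0 := by
      intro p hp
      rw [mem_dFiber] at hp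
      rw [projS_apply, hp, if_neg hdD]
      simp
    rw [Finset.sum_congr rfl hval, Finset.sum_const]
    simp only [smul_zero]
    positivity

end Aux2

section Aux3
variable {n : ℕ}

lemma frobNorm_nonneg (M : Matrix (Fin n) (Fin n) ℂ) : 0 ≤ frobNorm M :=
  Real.sqrt_nonneg _

lemma frobNorm_eq (M : Matrix (Fin n) (Fin n) ℂ) :
    frobNorm M = ‖(WithLp.equiv 2 (Fin n × Fin n → ℂ)).symm (fun p => M p.1 p.2)‖ := by
  rw [EuclideanSpace.norm_eq, frobNorm, ← Fintype.sum_prod_type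
    (f := fun p : Fin n × Fin n => ‖M p.1 p.2‖ ^ 2)]
  rfl

lemma abs_frobNorm_sub_frobNorm_le (A B : Matrix (Fin n) (Fin n) ℂ) :
    |frobNorm A - frobNorm B| ≤ frobNorm (A - B) := by
  rw [frobNorm_eq A, frobNorm_eq B, frobNorm_eq (A - B)]
  have h : (WithLp.equiv 2 (Fin n × Fin n → ℂ)).symm (fun p => (A - B) p.1 p.2)
      = (WithLp.equiv 2 (Fin n × Fin n → ℂ)).symm (fun p => A p.1 p.2) -
        (WithLp.equiv 2 (Fin n × Fin n → ℂ)).symm (fun p => B p.1 p.2) := by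
    ext p
    simp [Matrix.sub_apply]
  rw [h]
  exact abs_norm_sub_norm_le _ _

lemma projS_sub (D : Finset ℤ) (A B : Matrix (Fin n) (Fin n) ℂ) :
    projS n D (A - B) = projS n D A - projS n D B := by
  ext i j
  simp only [projS, Matrix.sub_apply]
  split
  · rw [div_sub_div_same, ← Finset.sum_sub_distrib]
    congr 1
    apply Finset.sum_congr rfl
    intro k _
    rw [← Finset.sum_sub_distrib]
    apply Finset.sum_congr rfl
    intro l _
    split <;> simp
  · simp

lemma specNorm_nonneg (M : Matrix (Fin n) (Fin n) ℂ) : 0 ≤ specNorm M := norm_nonneg _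

lemma specNorm_add_le (A B : Matrix (Fin n) (Fin n) ℂ) :
    specNorm (A + B) ≤ specNorm A + specNorm B := by
  simp only [specNorm, map_add]
  exact norm_add_le _ _

set_option synthInstance.maxHeartbeats 1000000 in
lemma specNorm_real_smul (r : ℝ) (A : Matrix (Fin n) (Fin n) ℂ) :
    specNorm (r • A) = |r| * specNorm A := by
  have h : r • A = ((r : ℂ)) • A := by
    ext i j
    simp [Complex.real_smul]
  have h2 : Matrix.toEuclideanCLM (𝕜 := ℂ) ((r : ℂ) • A) =
      (r : ℂ) • Matrix.toEuclideanCLM (𝕜 := ℂ) A := map_smul _ _ A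
  rw [h, specNorm, specNorm, h2,
    norm_smul (r : ℂ) (Matrix.toEuclideanCLM (𝕜 := ℂ) A)]
  simp

lemma specNorm_le_frobNorm (M : Matrix (Fin n) (Fin n) ℂ) : specNorm M ≤ frobNorm M := by
  rw [specNorm]
  apply ContinuousLinearMap.opNorm_le_bound _ (frobNorm_nonneg M)
  intro v
  have happ : ∀ i, (Matrix.toEuclideanCLM (𝕜 := ℂ) M v) i = ∑ j, M i j * v j := by
    intro i
    have h := congrFun (Matrix.ofLp_toEuclideanCLM (𝕜 := ℂ) M v) i
    simpa [Matrix.mulVec, dotProduct] using h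
  rw [EuclideanSpace.norm_eq, EuclideanSpace.norm_eq]
  have key : ∀ i : Fin n, ‖(Matrix.toEuclideanCLM (𝕜 := ℂ) M v) i‖ ^ 2 ≤
      (∑ j, ‖M i j‖ ^ 2) * (∑ j, ‖v j‖ ^ 2) := by
    intro i
    have h1 : ‖(Matrix.toEuclideanCLM (𝕜 := ℂ) M v) i‖ ≤ ∑ j, ‖M i j‖ * ‖v j‖ := by
      rw [happ i]
      refine (norm_sum_le _ _).trans ?_
      apply Finset.sum_le_sum
      intro j _
      rw [norm_mul]
    calc ‖(Matrix.toEuclideanCLM (𝕜 := ℂ) M v) i‖ ^ 2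
        ≤ (∑ j, ‖M i j‖ * ‖v j‖) ^ 2 := pow_le_pow_left₀ (norm_nonneg _) h1 2
      _ ≤ (∑ j, ‖M i j‖ ^ 2) * (∑ j, ‖v j‖ ^ 2) :=
          Finset.sum_mul_sq_le_sq_mul_sq _ _ _
  have hsum : (∑ i, ‖(Matrix.toEuclideanCLM (𝕜 := ℂ) M v) i‖ ^ 2) ≤
      (∑ i, ∑ j, ‖M i j‖ ^ 2) * (∑ j, ‖v j‖ ^ 2) := by
    rw [Finset.sum_mul]
    exact Finset.sum_le_sum fun i _ => key i
  calc Real.sqrt (∑ i, ‖(Matrix.toEuclideanCLM (𝕜 := ℂ) M v) i‖ ^ 2)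
      ≤ Real.sqrt ((∑ i, ∑ j, ‖M i j‖ ^ 2) * (∑ j, ‖v j‖ ^ 2)) :=
        Real.sqrt_le_sqrt hsum
    _ = frobNorm M * Real.sqrt (∑ j, ‖v j‖ ^ 2) := by
        rw [Real.sqrt_mul (by positivity), frobNorm]

lemma frobNorm_le_sqrt_mul_specNorm (M : Matrix (Fin n) (Fin n) ℂ) :
    frobNorm M ≤ Real.sqrt n * specNorm M := by
  have col : ∀ j : Fin n, (∑ i, ‖M i j‖ ^ 2) ≤ specNorm M ^ 2 := by
    intro j
    set v : EuclideanSpace ℂ (Fin n) := EuclideanSpace.single j (1 : ℂ) with hv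
    have hnv : ‖v‖ = 1 := by simp [hv]
    have happ : ∀ i, (Matrix.toEuclideanCLM (𝕜 := ℂ) M v) i = M i j := by
      intro i
      have h := congrFun (Matrix.ofLp_toEuclideanCLM (𝕜 := ℂ) M v) i
      have hv' : WithLp.ofLp v = Pi.single j (1 : ℂ) := by
        ext k
        simp [hv, EuclideanSpace.single_apply, Pi.single_apply]
      rw [hv'] at h
      simpa using h
    have hb : ‖Matrix.toEuclideanCLM (𝕜 := ℂ) M v‖ ≤ specNorm M := by
      have := (Matrix.toEuclideanCLM (𝕜 := ℂ) M).le_opNorm v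
      rwa [hnv, mul_one] at this
    have hn2 : ‖Matrix.toEuclideanCLM (𝕜 := ℂ) M v‖ ^ 2 = ∑ i, ‖M i j‖ ^ 2 := by
      rw [EuclideanSpace.norm_eq, Real.sq_sqrt (by positivity)]
      exact Finset.sum_congr rfl fun i _ => by rw [happ i]
    calc (∑ i, ‖M i j‖ ^ 2) = ‖Matrix.toEuclideanCLM (𝕜 := ℂ) M v‖ ^ 2 := hn2.symm
      _ ≤ specNorm M ^ 2 := pow_le_pow_left₀ (norm_nonneg _) hb 2
  have hsq : (∑ i : Fin n, ∑ j : Fin n, ‖M i j‖ ^ 2) ≤ n * specNorm M ^ 2 := by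
    rw [Finset.sum_comm]
    calc (∑ j : Fin n, ∑ i : Fin n, ‖M i j‖ ^ 2) ≤ ∑ _j : Fin n, specNorm M ^ 2 :=
          Finset.sum_le_sum fun j _ => col j
      _ = n * specNorm M ^ 2 := by simp [Finset.sum_const, mul_comm]
  calc frobNorm M ≤ Real.sqrt (n * specNorm M ^ 2) := Real.sqrt_le_sqrt hsq
    _ = Real.sqrt n * specNorm M := by
        rw [Real.sqrt_mul (by positivity), Real.sqrt_sq (specNorm_nonneg M)]

lemma frobNorm_projS_le (hn : 1 ≤ n) (D : Finset ℤ)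
    (hDsub : D ⊆ Finset.Icc (-((n : ℤ) - 1)) ((n : ℤ) - 1))
    (M : Matrix (Fin n) (Fin n) ℂ) :
    frobNorm (projS n D M) ≤ frobNorm M :=
  Real.sqrt_le_sqrt (frob_sq_projS_le hn D hDsub M)

lemma frobNorm_projS_ge (hn : 1 ≤ n) (D : Finset ℤ) (hD0 : (0 : ℤ) ∈ D)
    (M : Matrix (Fin n) (Fin n) ℂ) :
    ‖∑ i, M i i‖ / Real.sqrt n ≤ frobNorm (projS n D M) := by
  have hn0 : (0 : ℝ) < n := by exact_mod_cast hn
  have hdiag : ∀ i : Fin n, projS n D M i i = (∑ k : Fin n, M k k) / (n : ℂ) :=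
    projS_diag D hD0 M
  have hlow : ‖∑ i, M i i‖ ^ 2 / n ≤ ∑ i : Fin n, ∑ j : Fin n, ‖projS n D M i j‖ ^ 2 := by
    have h1 : (∑ i : Fin n, ‖projS n D M i i‖ ^ 2) = ‖∑ i, M i i‖ ^ 2 / n := by
      have : ∀ i : Fin n, ‖projS n D M i i‖ ^ 2 = ‖∑ k, M k k‖ ^ 2 / (n : ℝ) ^ 2 := by
        intro i
        rw [hdiag i, norm_div]
        simp [div_pow]
      rw [Finset.sum_congr rfl fun i _ => this i, Finset.sum_const]
      simp only [Finset.card_univ, Fintype.card_fin, nsmul_eq_mul]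
      field_simp
    rw [← h1]
    apply Finset.sum_le_sum
    intro i _
    exact Finset.single_le_sum (f := fun j => ‖projS n D M i j‖ ^ 2)
      (fun j _ => by positivity) (Finset.mem_univ i)
  rw [frobNorm]
  rw [div_le_iff₀ (Real.sqrt_pos.2 hn0)]
  rw [← Real.sqrt_sq (x := ‖∑ i, M i i‖) (norm_nonneg _), ← Real.sqrt_mul (by positivity)]
  apply Real.sqrt_le_sqrt
  rwa [div_le_iff₀ hn0] at hlow

end Aux3

section Aux4
variable {n : ℕ}

lemma trace_vecMulVec_star (x y : Fin n → ℂ)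
    (him : ((star y) ⬝ᵥ x).im = 0) :
    (∑ i, vecMulVec y (star x) i i) = ((((star y) ⬝ᵥ x).re : ℝ) : ℂ) := by
  have h1 : (∑ i, vecMulVec y (star x) i i) = star ((star y) ⬝ᵥ x) := by
    rw [dotProduct, star_sum]
    apply Finset.sum_congr rfl
    intro i _
    simp [vecMulVec_apply, mul_comm]
  rw [h1]
  have h2 : (star y) ⬝ᵥ x = ((((star y) ⬝ᵥ x).re : ℝ) : ℂ) := by
    apply Complex.ext <;> simp [him]
  rw [h2]
  simp

lemma frobNorm_zero_eq : frobNorm (0 : Matrix (Fin n) (Fin n) ℂ) = 0 := by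
  simp [frobNorm]

end Aux4

set_option maxHeartbeats 2000000 in
/-- Lipschitz-type bound for the normalized structured projection (Lemma 4.3 with the
explicit constant `2n/(y*x)`): if `‖yx* − ŷx̂*‖₂ = δ < (y*x)/n`, then both structured
projections are nonzero and `‖(yx*)|_T − (ŷx̂*)|_T‖₂ ≤ 2nδ/(y*x)`. -/
theorem projT_lipschitz {n : ℕ} (hn : 2 ≤ n) (D : Finset ℤ)
    (hD0 : (0 : ℤ) ∈ D) (hDsub : D ⊆ Finset.Icc (-((n : ℤ) - 1)) ((n : ℤ) - 1))
    (x y xh yh : Fin n → ℂ)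
    (hx : euclNorm x = 1) (hy : euclNorm y = 1)
    (hxh : euclNorm xh = 1) (hyh : euclNorm yh = 1)
    (hyx_im : ((star y) ⬝ᵥ x).im = 0) (hyx_re : 0 < ((star y) ⬝ᵥ x).re)
    (hyxh_im : ((star yh) ⬝ᵥ xh).im = 0) (hyxh_re : 0 < ((star yh) ⬝ᵥ xh).re)
    (δ : ℝ)
    (hδdef : δ = specNorm (vecMulVec y (star x) - vecMulVec yh (star xh)))
    (hδ : δ < ((star y) ⬝ᵥ x).re / n) :
    projS n D (vecMulVec y (star x)) ≠ 0 ∧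
    projS n D (vecMulVec yh (star xh)) ≠ 0 ∧
    specNorm (projT n D (vecMulVec y (star x)) - projT n D (vecMulVec yh (star xh))) ≤
      2 * n * δ / ((star y) ⬝ᵥ x).re := by
  have hn1 : 1 ≤ n := by omega
  have hn0 : (0 : ℝ) < n := by exact_mod_cast hn1
  have hs : (0 : ℝ) < Real.sqrt n := Real.sqrt_pos.2 hn0
  set t : ℝ := ((star y) ⬝ᵥ x).re with ht_eq
  set th : ℝ := ((star yh) ⬝ᵥ xh).re with hth_eq
  have htpos : 0 < t := hyx_re
  have hthpos : 0 < th := hyxh_re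
  set M1 : Matrix (Fin n) (Fin n) ℂ := vecMulVec y (star x) with hM1_eq
  set M2 : Matrix (Fin n) (Fin n) ℂ := vecMulVec yh (star xh) with hM2_eq
  set a : Matrix (Fin n) (Fin n) ℂ := projS n D M1 with ha_eq
  set b : Matrix (Fin n) (Fin n) ℂ := projS n D M2 with hb_eq
  set α : ℝ := frobNorm a with hα_eq
  set β : ℝ := frobNorm b with hβ_eq
  have htr1 : (∑ i, M1 i i) = ((t : ℝ) : ℂ) := trace_vecMulVec_star x y hyx_im
  have htr2 : (∑ i, M2 i i) = ((th : ℝ) : ℂ) := trace_vecMulVec_star xh yh hyxh_im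
  have hα : t / Real.sqrt n ≤ α := by
    have h := frobNorm_projS_ge hn1 D hD0 M1
    rw [htr1] at h
    rwa [Complex.norm_real, Real.norm_eq_abs, abs_of_pos htpos] at h
  have hβ : th / Real.sqrt n ≤ β := by
    have h := frobNorm_projS_ge hn1 D hD0 M2
    rw [htr2] at h
    rwa [Complex.norm_real, Real.norm_eq_abs, abs_of_pos hthpos] at h
  have hαpos : 0 < α := lt_of_lt_of_le (div_pos htpos hs) hα
  have hβpos : 0 < β := lt_of_lt_of_le (div_pos hthpos hs) hβ
  have ha0 : a ≠ 0 := by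
    intro h
    rw [hα_eq, h, frobNorm_zero_eq] at hαpos
    exact lt_irrefl 0 hαpos
  have hb0 : b ≠ 0 := by
    intro h
    rw [hβ_eq, h, frobNorm_zero_eq] at hβpos
    exact lt_irrefl 0 hβpos
  refine ⟨ha0, hb0, ?_⟩
  have hδ0 : 0 ≤ δ := by rw [hδdef]; exact specNorm_nonneg _
  have hfd : frobNorm (a - b) ≤ Real.sqrt n * δ := by
    rw [ha_eq, hb_eq, ← projS_sub]
    calc frobNorm (projS n D (M1 - M2)) ≤ frobNorm (M1 - M2) :=
          frobNorm_projS_le hn1 D hDsub _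
      _ ≤ Real.sqrt n * specNorm (M1 - M2) := frobNorm_le_sqrt_mul_specNorm _
      _ = Real.sqrt n * δ := by rw [hδdef]
  have hsd : specNorm (a - b) ≤ Real.sqrt n * δ :=
    le_trans (specNorm_le_frobNorm _) hfd
  have hβd : |α - β| ≤ Real.sqrt n * δ :=
    le_trans (abs_frobNorm_sub_frobNorm_le a b) hfd
  have hsb : specNorm b ≤ β := specNorm_le_frobNorm b
  have hdec : projT n D M1 - projT n D M2 = α⁻¹ • (a - b) + (α⁻¹ - β⁻¹) • b := by
    rw [projT, projT, ← ha_eq, ← hb_eq, ← hα_eq, ← hβ_eq]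
    module
  have hmain : specNorm (projT n D M1 - projT n D M2) ≤
      α⁻¹ * (Real.sqrt n * δ) + |α⁻¹ - β⁻¹| * β := by
    rw [hdec]
    refine (specNorm_add_le _ _).trans ?_
    rw [specNorm_real_smul, specNorm_real_smul, abs_of_pos (inv_pos.2 hαpos)]
    gcongr
  have h2 : |α⁻¹ - β⁻¹| * β ≤ (Real.sqrt n * δ) / α := by
    have e : α⁻¹ - β⁻¹ = (β - α) / (α * β) := by field_simp
    rw [e, abs_div, abs_of_pos (mul_pos hαpos hβpos), div_mul_eq_mul_div,
      div_le_div_iff₀ (mul_pos hαpos hβpos) hαpos]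
    calc |β - α| * β * α ≤ (Real.sqrt n * δ) * β * α := by
          gcongr
          rw [abs_sub_comm]
          exact hβd
      _ = (Real.sqrt n * δ) * (α * β) := by ring
  have htot : specNorm (projT n D M1 - projT n D M2) ≤ 2 * (Real.sqrt n * δ) / α := by
    refine hmain.trans ?_
    have : α⁻¹ * (Real.sqrt n * δ) + (Real.sqrt n * δ) / α = 2 * (Real.sqrt n * δ) / α := by
      field_simp
      ring
    rw [← this]
    gcongr
  refine htot.trans ?_
  have hinv : α⁻¹ ≤ Real.sqrt n / t := by
    have h := one_div_le_one_div_of_le (div_pos htpos hs) hα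
    rw [one_div_div] at h
    simpa [one_div] using h
  have hss : Real.sqrt n * Real.sqrt n = (n : ℝ) := Real.mul_self_sqrt hn0.le
  calc 2 * (Real.sqrt n * δ) / α = 2 * (Real.sqrt n * δ) * α⁻¹ := by
        rw [div_eq_mul_inv]
    _ ≤ 2 * (Real.sqrt n * δ) * (Real.sqrt n / t) := by
        apply mul_le_mul_of_nonneg_left hinv (by positivity)
    _ = 2 * (Real.sqrt n * Real.sqrt n) * δ / t := by ring
    _ = 2 * n * δ / t := by rw [hss]
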